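/- Fix an integer N ≥ 2 and a real number q with 0 < q < 1. Let n be a positive odd integer and set m = −n, s = q^{−N(n−1)/(2n)} and t = q^{−N(n+1)/(2n)}. Then s^m t^n = q^{−N}, and for every x ∈ ℂ \ {0} at which all theta factors occurring are nonzero, Y_{−n,n}(x;s,t) = 1. -/

import Mathlib

/-- Infinite `q`-Pochhammer symbol `(z;p)_∞ = ∏_{j≥0} (1 − z pʲ)`. -/
noncomputable def qPoch (z p : ℂ) : ℂ := ∏' j : ℕ, (1 - z * p ^ j)

/-- Jacobi Θ function `Θ_p(z) = (z;p)_∞ (p z⁻¹;p)_∞ (p;p)_∞`. -/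
noncomputable def ThetaF (p z : ℂ) : ℂ := qPoch z p * qPoch (p * z⁻¹) p * qPoch p p

/-- The function
`U(z) = q^{2/N−2} · Θ_{q^{2N}}(q²z²) Θ_{q^{2N}}(q²z⁻²) / (Θ_{q^{2N}}(z²) Θ_{q^{2N}}(z⁻²))`. -/
noncomputable def Ufun (N : ℕ) (q : ℝ) (z : ℂ) : ℂ :=
  ((q ^ ((2 : ℝ) / N - 2) : ℝ) : ℂ) *
    (ThetaF ((q : ℂ) ^ (2 * N)) ((q : ℂ) ^ 2 * z ^ 2) *
      ThetaF ((q : ℂ) ^ (2 * N)) ((q : ℂ) ^ 2 * z⁻¹ ^ 2)) /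
    (ThetaF ((q : ℂ) ^ (2 * N)) (z ^ 2) * ThetaF ((q : ℂ) ^ (2 * N)) (z⁻¹ ^ 2))

/-- All four theta factors occurring in `U(z)` are nonzero. -/
def thetaReg (N : ℕ) (q : ℝ) (z : ℂ) : Prop :=
  ThetaF ((q : ℂ) ^ (2 * N)) ((q : ℂ) ^ 2 * z ^ 2) ≠ 0 ∧
  ThetaF ((q : ℂ) ^ (2 * N)) ((q : ℂ) ^ 2 * z⁻¹ ^ 2) ≠ 0 ∧
  ThetaF ((q : ℂ) ^ (2 * N)) (z ^ 2) ≠ 0 ∧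
  ThetaF ((q : ℂ) ^ (2 * N)) (z⁻¹ ^ 2) ≠ 0

/-- `F_a(x;s) = ∏_{k=0}^{a−1} U(sᵏx)` for `a > 0`, `F₀ = 1`, and
`F_a(x;s) = ∏_{k=1}^{−a} U(s⁻ᵏx)⁻¹` for `a < 0`. -/
noncomputable def Ffun (N : ℕ) (q : ℝ) (s x : ℂ) (a : ℤ) : ℂ :=
  if 0 < a then ∏ k ∈ Finset.range a.toNat, Ufun N q (s ^ (k : ℕ) * x)
  else ∏ k ∈ Finset.range (-a).toNat, (Ufun N q (s ^ (-(k : ℤ) - 1) * x))⁻¹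

/-- The structure function
`Y_{m,n}(x;s,t) = F_n(x;t) F_{−n}(x;t) / (F_m(x;s) F_{−m}(x;s))`. -/
noncomputable def Yfun (N : ℕ) (q : ℝ) (s t x : ℂ) (m n : ℤ) : ℂ :=
  Ffun N q t x n * Ffun N q t x (-n) / (Ffun N q s x m * Ffun N q s x (-m))

/-!
`U` is invariant under `z ↦ q^N z`: this multiplies `z²` by the nome `q^{2N}` of the theta
functions, and the quasi-periodicity factors `Θ_p(pw) = -w⁻¹ Θ_p(w)` cancel between numerator
and denominator. For odd `n = 2l + 1` the chosen `s, t` satisfy `sⁿ = q^{-Nl}` and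
`tⁿ = q^{-N(l+1)}`, so `U(uⁿ w) = U(w)` for `u ∈ {s, t}`; then `F_n(x;u)` telescopes against
`F_{-n}(x;u)` term by term, since `u^{n-1-k} x = uⁿ · u^{-k-1} x`.
-/

open Complex

lemma multipliable_one_sub_mul_pow (z : ℂ) {p : ℂ} (hp : ‖p‖ < 1) :
    Multipliable fun j : ℕ => 1 - z * p ^ j := by
  simpa [sub_eq_add_neg] using Complex.multipliable_one_add_of_summable
    ((summable_geometric_of_norm_lt_one hp).mul_left z).neg

lemma qPoch_eq_one_sub_mul (z : ℂ) {p : ℂ} (hp : ‖p‖ < 1) :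
    qPoch z p = (1 - z) * qPoch (p * z) p := by
  have hm : Multipliable fun j : ℕ => 1 - z * p ^ (j + 1) :=
    (multipliable_one_sub_mul_pow (p * z) hp).congr fun j => by ring
  rw [qPoch, tprod_eq_zero_mul' (f := fun j : ℕ => 1 - z * p ^ j) hm, pow_zero, mul_one, qPoch]
  congr 1
  exact tprod_congr fun j => by ring

lemma ThetaF_mul_left {p : ℂ} (hp : ‖p‖ < 1) (hp0 : p ≠ 0) {z : ℂ} (hz : z ≠ 0) :
    ThetaF p (p * z) = -z⁻¹ * ThetaF p z := by
  have hinv : p * (p * z)⁻¹ = z⁻¹ := by field_simp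
  rw [ThetaF, hinv, qPoch_eq_one_sub_mul z⁻¹ hp, ThetaF, qPoch_eq_one_sub_mul z hp]
  field_simp
  ring

lemma ThetaF_inv_mul {p : ℂ} (hp : ‖p‖ < 1) (hp0 : p ≠ 0) {z : ℂ} (hz : z ≠ 0) :
    ThetaF p (p⁻¹ * z) = -(p⁻¹ * z) * ThetaF p z := by
  have h := ThetaF_mul_left hp hp0 (mul_ne_zero (inv_ne_zero hp0) hz)
  rw [mul_inv_cancel_left₀ hp0] at h
  rw [h]
  field_simp

noncomputable def thetaRatio (p a w : ℂ) : ℂ :=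
  ThetaF p (a * w) * ThetaF p (a * w⁻¹) / (ThetaF p w * ThetaF p w⁻¹)

lemma thetaRatio_mul_left {p a : ℂ} (hp : ‖p‖ < 1) (hp0 : p ≠ 0) (ha : a ≠ 0) (w : ℂ) :
    thetaRatio p a (p * w) = thetaRatio p a w := by
  rcases eq_or_ne w 0 with rfl | hw
  · rw [mul_zero]
  have hnum : a * (p * w) = p * (a * w) := by ring
  have hinv : a * (p * w)⁻¹ = p⁻¹ * (a * w⁻¹) := by field_simp
  rw [thetaRatio, thetaRatio, hnum, hinv, mul_inv, ThetaF_mul_left hp hp0 (mul_ne_zero ha hw),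
    ThetaF_inv_mul hp hp0 (mul_ne_zero ha (inv_ne_zero hw)), ThetaF_mul_left hp hp0 hw,
    ThetaF_inv_mul hp hp0 (inv_ne_zero hw)]
  field_simp

lemma zpow_mul_invariant {α β : Type*} [GroupWithZero α] {f : α → β} {p : α} (hp : p ≠ 0)
    (hf : ∀ w, f (p * w) = f w) (j : ℤ) (w : α) : f (p ^ j * w) = f w := by
  induction j using Int.induction_on with
  | zero => rw [zpow_zero, one_mul]
  | succ j ih => rw [add_comm, zpow_one_add₀ hp, mul_assoc, hf, ih]
  | pred j ih =>
    rw [← ih, ← hf, ← mul_assoc, ← zpow_one_add₀ hp]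
    ring_nf

lemma Ufun_eq_thetaRatio (N : ℕ) (q : ℝ) (z : ℂ) :
    Ufun N q z = ((q ^ ((2 : ℝ) / N - 2) : ℝ) : ℂ) *
      thetaRatio ((q : ℂ) ^ (2 * N)) ((q : ℂ) ^ 2) (z ^ 2) := by
  rw [Ufun, thetaRatio, inv_pow, mul_div_assoc]

lemma Ufun_zpow_mul (N : ℕ) {q : ℝ} (hq0 : 0 < q) (hq1 : q < 1) (j : ℤ) (z : ℂ) :
    Ufun N q ((q : ℂ) ^ ((N : ℤ) * j) * z) = Ufun N q z := by
  rcases N.eq_zero_or_pos with rfl | hN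
  · simp
  have hqc : (q : ℂ) ≠ 0 := ofReal_ne_zero.mpr hq0.ne'
  have hp : ‖(q : ℂ) ^ (2 * N)‖ < 1 := by
    rw [norm_pow, norm_real, Real.norm_of_nonneg hq0.le]
    exact pow_lt_one₀ hq0.le hq1 (by omega)
  have hsq : ((q : ℂ) ^ ((N : ℤ) * j) * z) ^ 2 = ((q : ℂ) ^ (2 * N)) ^ j * z ^ 2 := by
    rw [mul_pow, ← zpow_natCast _ 2, ← zpow_mul, ← zpow_natCast (q : ℂ) (2 * N), ← zpow_mul]
    push_cast
    ring_nf
  rw [Ufun_eq_thetaRatio, Ufun_eq_thetaRatio, hsq,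
    zpow_mul_invariant (pow_ne_zero _ hqc) (thetaRatio_mul_left hp (pow_ne_zero _ hqc)
      (pow_ne_zero _ hqc))]

lemma Ufun_ne_zero (N : ℕ) {q : ℝ} (hq0 : 0 < q) {w : ℂ} (h : thetaReg N q w) :
    Ufun N q w ≠ 0 := by
  obtain ⟨h1, h2, h3, h4⟩ := h
  have hC : ((q ^ ((2 : ℝ) / N - 2) : ℝ) : ℂ) ≠ 0 :=
    ofReal_ne_zero.mpr (Real.rpow_pos_of_pos hq0 _).ne'
  exact div_ne_zero (mul_ne_zero hC (mul_ne_zero h1 h2)) (mul_ne_zero h3 h4)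

lemma Ffun_mul_Ffun_neg (N : ℕ) {q : ℝ} (hq0 : 0 < q) {u : ℂ} (hu : u ≠ 0) (x : ℂ)
    {n : ℤ} (hn : 0 < n) (hper : ∀ w, Ufun N q (u ^ n * w) = Ufun N q w)
    (hreg : ∀ k : ℤ, -n ≤ k → k < 0 → thetaReg N q (u ^ k * x)) :
    Ffun N q u x n * Ffun N q u x (-n) = 1 := by
  rw [Ffun, Ffun, if_pos hn, if_neg (by omega), neg_neg,
    ← Finset.prod_range_reflect, ← Finset.prod_mul_distrib]
  refine Finset.prod_eq_one fun k hk => ?_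
  have hk : k < n.toNat := Finset.mem_range.mp hk
  have hshift : u ^ (n.toNat - 1 - k) * x = u ^ n * (u ^ (-(k : ℤ) - 1) * x) := by
    rw [← zpow_natCast, ← mul_assoc, ← zpow_add₀ hu]
    congr 2
    omega
  rw [hshift, hper]
  exact mul_inv_cancel₀ (Ufun_ne_zero N hq0 (hreg _ (by omega) (by omega)))

lemma ofReal_rpow_zpow {q : ℝ} (hq0 : 0 < q) {c : ℝ} {m k : ℤ} (h : c * m = k) :
    ((q ^ c : ℝ) : ℂ) ^ m = (q : ℂ) ^ k := by
  rw [← ofReal_zpow, ← Real.rpow_intCast, ← Real.rpow_mul hq0.le, h, Real.rpow_intCast,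
    ofReal_zpow]

theorem Yfun_abelian_opposite_general (N : ℕ) (q : ℝ) (hq0 : 0 < q) (hq1 : q < 1)
    (n : ℤ) (hn : 0 < n) (hodd : Odd n)
    (s t : ℂ)
    (hsdef : s = ((q ^ (-(N : ℝ) * ((n : ℝ) - 1) / (2 * (n : ℝ))) : ℝ) : ℂ))
    (htdef : t = ((q ^ (-(N : ℝ) * ((n : ℝ) + 1) / (2 * (n : ℝ))) : ℝ) : ℂ)) :
    s ^ (-n) * t ^ n = (q : ℂ) ^ (-(N : ℤ)) ∧
    ∀ x : ℂ, x ≠ 0 →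
      (∀ k : ℤ, |k| ≤ n → thetaReg N q (s ^ k * x)) →
      (∀ k : ℤ, |k| ≤ n → thetaReg N q (t ^ k * x)) →
      Yfun N q s t x (-n) n = 1 := by
  obtain ⟨l, rfl⟩ := hodd
  have hnR : (2 * (l : ℝ) + 1) ≠ 0 := by exact_mod_cast hn.ne'
  have hsn : s ^ (2 * l + 1) = (q : ℂ) ^ ((N : ℤ) * (-l)) := by
    rw [hsdef]
    exact ofReal_rpow_zpow hq0 (by push_cast; field_simp; ring)
  have htn : t ^ (2 * l + 1) = (q : ℂ) ^ ((N : ℤ) * (-l - 1)) := by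
    rw [htdef]
    exact ofReal_rpow_zpow hq0 (by push_cast; field_simp; ring)
  have hs0 : s ≠ 0 := hsdef ▸ ofReal_ne_zero.mpr (Real.rpow_pos_of_pos hq0 _).ne'
  have ht0 : t ≠ 0 := htdef ▸ ofReal_ne_zero.mpr (Real.rpow_pos_of_pos hq0 _).ne'
  refine ⟨?_, fun x _ hregs hregt => ?_⟩
  · rw [zpow_neg, hsn, htn, ← zpow_neg, ← zpow_add₀ (ofReal_ne_zero.mpr hq0.ne')]
    ring_nf
  · have hs := Ffun_mul_Ffun_neg N hq0 hs0 x hn (fun w => hsn ▸ Ufun_zpow_mul N hq0 hq1 _ w)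
      fun k hk hk' => hregs k (abs_le.mpr ⟨hk, by omega⟩)
    have ht := Ffun_mul_Ffun_neg N hq0 ht0 x hn (fun w => htn ▸ Ufun_zpow_mul N hq0 hq1 _ w)
      fun k hk hk' => hregt k (abs_le.mpr ⟨hk, by omega⟩)
    rw [Yfun, neg_neg, ht, mul_comm, hs, div_one]

/-- Abelianity for `m + n = 0` with `n > 0` odd: with `s = q^{−N(n−1)/(2n)}` and
`t = q^{−N(n+1)/(2n)}`, the surface condition `s^{−n} t^n = q^{−N}` holds and
`Y_{−n,n}(x;s,t) = 1` at every nonzero `x` where all theta factors occurring are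
nonzero. -/
theorem Yfun_abelian_opposite (N : ℕ) (hN : 2 ≤ N) (q : ℝ) (hq0 : 0 < q) (hq1 : q < 1)
    (n : ℤ) (hn : 0 < n) (hodd : Odd n)
    (s t : ℂ)
    (hsdef : s = ((q ^ (-(N : ℝ) * ((n : ℝ) - 1) / (2 * (n : ℝ))) : ℝ) : ℂ))
    (htdef : t = ((q ^ (-(N : ℝ) * ((n : ℝ) + 1) / (2 * (n : ℝ))) : ℝ) : ℂ)) :
    s ^ (-n) * t ^ n = (q : ℂ) ^ (-(N : ℤ)) ∧
    ∀ x : ℂ, x ≠ 0 →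
      (∀ k : ℤ, |k| ≤ n → thetaReg N q (s ^ k * x)) →
      (∀ k : ℤ, |k| ≤ n → thetaReg N q (t ^ k * x)) →
      Yfun N q s t x (-n) n = 1 :=
  Yfun_abelian_opposite_general N q hq0 hq1 n hn hodd s t hsdef htdef
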